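/- arXiv:2410.03975 — 2 statements merged into one kernel-verified Lean document; each statement's English description precedes it below -/
import Mathlib

section
/- Let $k \geq 1$ and $c_k \geq 2$ be integers, and define $u_k(x,y) = \sum_{j=1}^{2c_k - 1} b_{k,j} \sin(\tfrac{\pi}{2^k} j x) e^{\tfrac{\pi}{2^k} j y}$ with coefficients determined by $\sum_j (-1)^{(j-1)/2} b_{k,j} x^j = P_{c_k}(x)$. Then the zeros of $y \mapsto u_k(2^{k-1}, y)$ are exactly the points $y_{k,j} = \tfrac{2^{k-1}}{\pi} \log(1 - \tfrac{1}{j})$ for $2 \leq j \leq c_k$, and at each such zero $\tfrac{\partial u_k}{\partial y}(2^{k-1}, y_{k,j}) \neq 0$. -/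
/-!
With `t = exp (π y / 2 ^ k)` and `x = 2 ^ (k - 1)`, each surviving (odd) term has
`sin (π j / 2) = (-1) ^ ((j - 1) / 2)`, so `u (2 ^ (k - 1)) y = P_c t`. As `t > 0`, the zeros are
the `y` with `t ^ 2 = 1 - 1 / j`; these roots of `P_c` are simple and `dt/dy = π t / 2 ^ k > 0`,
so the `y`-derivative does not vanish there.
-/

open Real Finset

noncomputable def P (c : ℕ) (x : ℝ) : ℝ := x * ∏ j ∈ Icc 2 c, (x ^ 2 - 1 + 1 / (j : ℝ))

theorem HasDerivAt.finsetProd_of_eq_zero {ι 𝕜 : Type*} [DecidableEq ι]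
    [NontriviallyNormedField 𝕜]
    {s : Finset ι} {g : ι → 𝕜 → 𝕜} {g' : ι → 𝕜} {x : 𝕜} {j : ι} (hj : j ∈ s)
    (hg : ∀ i ∈ s, HasDerivAt (g i) (g' i) x) (hgj : g j x = 0) :
    HasDerivAt (∏ i ∈ s, g i ·) ((∏ i ∈ s.erase j, g i x) * g' j) x := by
  refine (HasDerivAt.fun_finsetProd hg).congr_deriv ?_
  rw [sum_eq_single_of_mem j hj fun i _ hij => ?_, smul_eq_mul]
  rw [smul_eq_mul, prod_eq_zero (mem_erase.2 ⟨hij.symm, hj⟩) hgj, zero_mul]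

theorem sin_pi_div_two_mul_of_odd {j : ℕ} (hj : Odd j) :
    sin (π / 2 * j) = (-1) ^ ((j - 1) / 2) := by
  obtain ⟨m, rfl⟩ := hj
  rw [show (2 * m + 1 - 1) / 2 = m by omega, ← cos_nat_mul_pi, ← sin_add_pi_div_two]
  push_cast
  ring_nf

theorem one_sub_one_div_pos {j : ℕ} (hj : 2 ≤ j) : 0 < 1 - 1 / (j : ℝ) := by
  have : (1 : ℝ) < j := by exact_mod_cast hj
  exact sub_pos.2 ((div_lt_one (by positivity)).2 this)

theorem P_eq_zero_iff {c : ℕ} {t : ℝ} (ht : t ≠ 0) :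
    P c t = 0 ↔ ∃ j ∈ Icc 2 c, t ^ 2 = 1 - 1 / (j : ℝ) := by
  simp only [P, mul_eq_zero, ht, false_or, prod_eq_zero_iff]
  refine exists_congr fun j => and_congr_right fun _ => ?_
  constructor <;> intro h <;> linarith

theorem exists_hasDerivAt_P_ne_zero {c j : ℕ} (hj : j ∈ Icc 2 c) {t : ℝ} (ht : t ≠ 0)
    (htj : t ^ 2 = 1 - 1 / (j : ℝ)) : ∃ d ≠ 0, HasDerivAt (P c) d t := by
  have hfactor : ∀ i : ℕ, t ^ 2 - 1 + 1 / (i : ℝ) = 1 / i - 1 / j := fun i => by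
    rw [htj]; ring
  have hprod := HasDerivAt.finsetProd_of_eq_zero hj
    (fun i _ => ((hasDerivAt_pow 2 t).sub_const 1).add_const (1 / (i : ℝ)))
    (by simp only [hfactor, sub_self])
  refine ⟨t * ((∏ i ∈ (Icc 2 c).erase j, (t ^ 2 - 1 + 1 / (i : ℝ))) * (2 * t ^ 1)),
    ?_, ?_⟩
  · refine mul_ne_zero ht (mul_ne_zero (prod_ne_zero_iff.2 fun i hi => ?_) (by simpa))
    obtain ⟨hij, hi⟩ := mem_erase.1 hi
    rw [hfactor, sub_ne_zero, one_div, one_div, Ne, inv_inj, Nat.cast_inj]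
    exact hij
  · refine ((hasDerivAt_id t).mul hprod).congr_deriv ?_
    rw [prod_eq_zero hj (by simp only [hfactor, sub_self])]
    simp

theorem sum_sin_mul_exp_eq_P {k c : ℕ} (hk : 1 ≤ k) {b : ℕ → ℝ}
    (hb : ∀ x : ℝ,
      ∑ j ∈ Icc 1 (2 * c - 1), (-1 : ℝ) ^ ((j - 1) / 2) * b j * x ^ j = P c x)
    (hb0 : ∀ j, Even j → b j = 0) (y : ℝ) :
    ∑ j ∈ Icc 1 (2 * c - 1), b j * sin (π / 2 ^ k * j * 2 ^ (k - 1)) * exp (π / 2 ^ k * j * y)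
      = P c (exp (π / 2 ^ k * y)) := by
  rw [← hb]
  refine sum_congr rfl fun j _ => ?_
  rcases Nat.even_or_odd j with he | ho
  · simp [hb0 j he]
  · have harg : π / 2 ^ k * j * 2 ^ (k - 1) = π / 2 * j := by
      rw [← pow_sub_one_mul (by omega : k ≠ 0)]
      field_simp
    rw [harg, sin_pi_div_two_mul_of_odd ho, ← exp_nat_mul]
    ring_nf

theorem exp_pi_div_two_pow_mul_sq_eq_iff {k : ℕ} (hk : 1 ≤ k) {a : ℝ} (ha : 0 < a) (y : ℝ) :
    exp (π / 2 ^ k * y) ^ 2 = a ↔ y = 2 ^ (k - 1) / π * log a := by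
  rw [← exp_nat_mul, ← exp_log ha, exp_eq_exp, log_exp,
    ← pow_sub_one_mul (by omega : k ≠ 0)]
  constructor <;> intro h
  · rw [← h]; field_simp; ring
  · rw [h]; field_simp; ring

theorem stmt6_general (k c : ℕ) (hk : 1 ≤ k) (b : ℕ → ℝ)
    (hb : ∀ x : ℝ, ∑ j ∈ Finset.Icc 1 (2 * c - 1), (-1 : ℝ) ^ ((j - 1) / 2) * b j * x ^ j
      = x * ∏ j ∈ Finset.Icc 2 c, (x ^ 2 - 1 + 1 / (j : ℝ)))
    (hb0 : ∀ j, Even j → b j = 0)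
    (u : ℝ → ℝ → ℝ)
    (hu : ∀ x y : ℝ, u x y = ∑ j ∈ Finset.Icc 1 (2 * c - 1),
      b j * Real.sin (Real.pi / 2 ^ k * j * x) * Real.exp (Real.pi / 2 ^ k * j * y)) :
    {y : ℝ | u (2 ^ (k - 1)) y = 0}
      = (fun j : ℕ => 2 ^ (k - 1) / Real.pi * Real.log (1 - 1 / (j : ℝ))) '' (Set.Icc 2 c) ∧
    ∀ j : ℕ, j ∈ Set.Icc 2 c →
      deriv (fun y => u (2 ^ (k - 1)) y)
        (2 ^ (k - 1) / Real.pi * Real.log (1 - 1 / (j : ℝ))) ≠ 0 := by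
  have hline : ∀ y, u (2 ^ (k - 1)) y = P c (exp (π / 2 ^ k * y)) := fun y => by
    rw [hu]; exact sum_sin_mul_exp_eq_P hk hb hb0 y
  refine ⟨Set.ext fun y => ?_, fun j hj => ?_⟩
  · rw [Set.mem_ofPred_eq, hline, P_eq_zero_iff (exp_pos _).ne', Set.mem_image]
    refine exists_congr fun j => ?_
    rw [mem_Icc, Set.mem_Icc, and_congr_right_iff]
    exact fun hj => (exp_pi_div_two_pow_mul_sq_eq_iff hk (one_sub_one_div_pos hj.1) y).trans eq_comm
  · set y₀ := 2 ^ (k - 1) / π * log (1 - 1 / (j : ℝ))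
    obtain ⟨d, hd, hP⟩ := exists_hasDerivAt_P_ne_zero (mem_Icc.2 hj) (exp_pos _).ne'
      ((exp_pi_div_two_pow_mul_sq_eq_iff hk (one_sub_one_div_pos hj.1) y₀).2 rfl)
    have hexp : HasDerivAt (fun y => exp (π / 2 ^ k * y))
        (exp (π / 2 ^ k * y₀) * (π / 2 ^ k)) y₀ := by
      simpa using ((hasDerivAt_id y₀).const_mul (π / 2 ^ k)).exp
    rw [((hP.comp y₀ hexp).congr_of_eventuallyEq (.of_forall hline)).deriv]
    exact mul_ne_zero hd (by positivity)

theorem stmt6 (k c : ℕ) (hk : 1 ≤ k) (hc : 2 ≤ c) (b : ℕ → ℝ)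
    (hb : ∀ x : ℝ, ∑ j ∈ Finset.Icc 1 (2 * c - 1), (-1 : ℝ) ^ ((j - 1) / 2) * b j * x ^ j
      = x * ∏ j ∈ Finset.Icc 2 c, (x ^ 2 - 1 + 1 / (j : ℝ)))
    (hb0 : ∀ j, Even j → b j = 0)
    (u : ℝ → ℝ → ℝ)
    (hu : ∀ x y : ℝ, u x y = ∑ j ∈ Finset.Icc 1 (2 * c - 1),
      b j * Real.sin (Real.pi / 2 ^ k * j * x) * Real.exp (Real.pi / 2 ^ k * j * y)) :
    {y : ℝ | u (2 ^ (k - 1)) y = 0}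
      = (fun j : ℕ => 2 ^ (k - 1) / Real.pi * Real.log (1 - 1 / (j : ℝ))) '' (Set.Icc 2 c) ∧
    ∀ j : ℕ, j ∈ Set.Icc 2 c →
      deriv (fun y => u (2 ^ (k - 1)) y)
        (2 ^ (k - 1) / Real.pi * Real.log (1 - 1 / (j : ℝ))) ≠ 0 :=
  stmt6_general k c hk b hb hb0 u hu
end

section
/- For all $\varepsilon > 0$ and any sequence of positive integers $\{n_i\}_{i \geq 1}$, there exists a holomorphic map $f: \mathbb{C}^2 \to \mathbb{C}^2$ and a constant $C > 0$ such that $\max_{B_r} |f| \leq C e^{r^{1+\varepsilon}}$ for all $r \geq 0$, and for every integer $k \geq 1$, $f$ has at least $\sum_{i=1}^{k} n_i$ isolated zeros inside $B_{2^k}$. -/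
/-!
Put `g z = exp (2πz) - 1`, whose zeros include the nodes `a j = j i`, and let `E j` be the
difference quotient of `g` at `a j`: an entire function of exponential type `2π` that vanishes at
every node except `a j`, where it equals `g' (a j) = 2π`. With `P N w = ∏_{m ≤ N} (w - 1/m)` take
`f (z, w) = (g z, ∑ j, c j * E j z * P (n j) w)`. Above `z = a j` the series collapses to
`2π c j P (n j) w`, so the points `(a j, 1/m)`, `m ≤ n j`, are zeros of `f`; they are isolated
because `a j` is a simple zero of `g` and `P (n j)` has finitely many roots.

Each term is `O(exp (‖p‖ ^ (1 + ε)))` by Young's inequality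
`s r ≤ s ^ (1 + 1/ε) + r ^ (1 + ε)`, with a constant `B j` depending on `n j`; the weights
`c j = 2⁻ʲ / B j` make the series converge normally on balls, so it is holomorphic (Cauchy
estimates control the derivatives) and bounded by `2 exp (r ^ (1 + ε))` on `B_r`. The number of
zeros is paid for in the weights, not in the order.
-/

open Filter Metric Topology
open scoped Real

theorem Set.Finite.eventually_mem_imp_eq {X : Type*} [TopologicalSpace X] [T1Space X]
    {s : Set X} (hs : s.Finite) (x : X) : ∀ᶠ y in 𝓝 x, y ∈ s → y = x := by
  filter_upwards [(hs.sdiff (t := {x})).isClosed.compl_mem_nhds (by simp)] with y hy hys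
  by_contra hyx
  exact hy ⟨hys, hyx⟩

section Series

variable {E F : Type*} [NormedAddCommGroup E] [NormedSpace ℂ E]
  [NormedAddCommGroup F] [NormedSpace ℂ F]

theorem norm_fderiv_le_of_forall_norm_sub_le_one {h : E → F} (hh : Differentiable ℂ h) {p : E}
    {M : ℝ} (hM : ∀ q, ‖q - p‖ ≤ 1 → ‖h q‖ ≤ M) : ‖fderiv ℂ h p‖ ≤ M := by
  refine ContinuousLinearMap.opNorm_le_of_unit_norm ((norm_nonneg _).trans (hM p (by simp)))
    fun v hv => ?_
  have hline : HasDerivAt (fun t : ℂ => h (p + t • v)) (fderiv ℂ h p v) 0 := by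
    simpa [Function.comp_def] using (hh (p + (0 : ℂ) • v)).hasFDerivAt.comp_hasDerivAt (0 : ℂ)
      (((hasDerivAt_id (0 : ℂ)).smul_const v).const_add p)
  rw [← hline.deriv]
  simpa [Function.comp_def] using Complex.norm_deriv_le_of_forall_mem_sphere_norm_le one_pos
    (hh.comp ((differentiable_id.smul_const v).const_add p)).diffContOnCl
    fun t ht => hM _ (by simp_all [norm_smul])

variable [CompleteSpace F]

theorem differentiable_tsum_of_forall_norm_le {T : ℕ → E → F}
    (hT : ∀ j, Differentiable ℂ (T j))
    (hbound : ∀ r, ∃ u : ℕ → ℝ, Summable u ∧ ∀ j p, ‖p‖ ≤ r → ‖T j p‖ ≤ u j) :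
    Differentiable ℂ fun p => ∑' j, T j p := by
  intro p
  obtain ⟨u, hu, hTu⟩ := hbound (‖p‖ + 2)
  have hfderiv : ∀ j, ∀ q ∈ ball (0 : E) (‖p‖ + 1), ‖fderiv ℂ (T j) q‖ ≤ u j :=
    fun j q hq => norm_fderiv_le_of_forall_norm_sub_le_one (hT j) fun q' hq' => hTu j q' <| by
      have := norm_le_norm_sub_add q' q
      rw [mem_ball_zero_iff] at hq
      linarith
  exact (hasFDerivAt_tsum_of_isPreconnected hu isOpen_ball (convex_ball _ _).isPreconnected
    (fun j q _ => (hT j q).hasFDerivAt) hfderiv (mem_ball_self (by positivity))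
    (.of_norm_bounded hu fun j => hTu j 0 (by simp; positivity))
    (by simp)).differentiableAt

theorem exists_differentiable_tsum_smul_norm_le {T : ℕ → E → F} {Φ : ℝ → ℝ}
    (hT : ∀ j, Differentiable ℂ (T j))
    (hTΦ : ∀ j, ∃ B > 0, ∀ r p, ‖p‖ ≤ r → ‖T j p‖ ≤ B * Φ r) :
    ∃ c : ℕ → ℂ, (∀ j, c j ≠ 0) ∧ Differentiable ℂ (fun p => ∑' j, c j • T j p) ∧
      ∀ r p, ‖p‖ ≤ r → ‖∑' j, c j • T j p‖ ≤ 2 * Φ r := by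
  choose B hB hTB using hTΦ
  have hsmall : ∀ j r p, ‖p‖ ≤ r →
      ‖(((1 / 2) ^ j / B j : ℝ) : ℂ) • T j p‖ ≤ (1 / 2) ^ j * Φ r := by
    intro j r p hp
    rw [norm_smul, Complex.norm_real, Real.norm_of_nonneg (div_nonneg (by positivity) (hB j).le),
      div_mul_eq_mul_div, div_le_iff₀ (hB j), mul_assoc]
    exact mul_le_mul_of_nonneg_left (by linarith [hTB j r p hp]) (by positivity)
  refine ⟨fun j => (((1 / 2) ^ j / B j : ℝ) : ℂ), fun j => by simp [(hB j).ne'], ?_,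
    fun r p hp => tsum_of_norm_bounded (hasSum_geometric_two.mul_right (Φ r))
      fun j => hsmall j r p hp⟩
  exact differentiable_tsum_of_forall_norm_le (fun j => (hT j).const_smul _)
    fun r => ⟨_, summable_geometric_two.mul_right (Φ r), fun j p hp => hsmall j r p hp⟩

end Series

theorem Real.exp_mul_le_exp_rpow_mul_exp_rpow {s r ε : ℝ} (hs : 0 ≤ s) (hr : 0 ≤ r)
    (hε : 0 < ε) :
    Real.exp (s * r) ≤ Real.exp (s ^ (1 + ε⁻¹)) * Real.exp (r ^ (1 + ε)) := by
  have hpq : (1 + ε⁻¹).HolderConjugate (1 + ε) :=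
    Real.holderConjugate_iff.2 ⟨by simp [hε], by field_simp; ring⟩
  rw [← Real.exp_add, Real.exp_le_exp]
  calc s * r ≤ s ^ (1 + ε⁻¹) / (1 + ε⁻¹) + r ^ (1 + ε) / (1 + ε) :=
        Real.young_inequality_of_nonneg hs hr hpq
    _ ≤ s ^ (1 + ε⁻¹) + r ^ (1 + ε) := by
        gcongr <;> apply div_le_self (by positivity) <;> simp [hε.le]

section OneVariable

variable {F : Type*} [NormedAddCommGroup F] [NormedSpace ℂ F]

theorem norm_le_of_forall_one_le_norm_sub {h : ℂ → F} (hh : Differentiable ℂ h) {c : ℂ}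
    {Φ : ℝ → ℝ} (hΦ : Monotone Φ) (hbound : ∀ z, 1 ≤ ‖z - c‖ → ‖h z‖ ≤ Φ ‖z‖) (z : ℂ) :
    ‖h z‖ ≤ Φ (‖z‖ + 2) := by
  rcases le_or_gt 1 ‖z - c‖ with hz | hz
  · exact (hbound z hz).trans (hΦ (by linarith))
  -- maximum modulus on the unit disc around `c`, whose boundary points have norm `≤ ‖z‖ + 2`
  refine Complex.norm_le_of_forall_mem_frontier_norm_le isBounded_ball hh.diffContOnCl
    (fun ζ hζ => ?_) (subset_closure (mem_ball_iff_norm.2 hz))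
  rw [frontier_ball c one_ne_zero, mem_sphere_iff_norm] at hζ
  refine (hbound ζ hζ.ge).trans (hΦ ?_)
  have := norm_le_norm_sub_add ζ c
  have := norm_le_norm_sub_add c z
  rw [norm_sub_rev] at this
  linarith

variable [CompleteSpace F]

theorem norm_dslope_le {h : ℂ → F} (hh : Differentiable ℂ h) (c : ℂ) {Φ : ℝ → ℝ}
    (hΦ : Monotone Φ) (hbound : ∀ z, ‖h z - h c‖ ≤ Φ ‖z‖) (z : ℂ) :
    ‖dslope h c z‖ ≤ Φ (‖z‖ + 2) := by
  refine norm_le_of_forall_one_le_norm_sub (c := c) ?_ hΦ (fun w (hw : 1 ≤ ‖w - c‖) => ?_) z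
  · exact differentiableOn_univ.1 <|
      (Complex.differentiableOn_dslope univ_mem).2 hh.differentiableOn
  · have hwc : w ≠ c := by rintro rfl; norm_num at hw
    rw [dslope_of_ne _ hwc, slope_def_module, norm_smul, norm_inv]
    exact (mul_le_of_le_one_left (norm_nonneg _) (inv_le_one_of_one_le₀ hw)).trans (hbound w)

end OneVariable

noncomputable section

namespace BezoutCounterexample

def expSubOne (z : ℂ) : ℂ := Complex.exp (2 * π * z) - 1

def node (j : ℕ) : ℂ := j * Complex.I

def lagrangeFactor (j : ℕ) : ℂ → ℂ := dslope expSubOne (node j)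

def invNatPoly (N : ℕ) (w : ℂ) : ℂ := ∏ m ∈ Finset.Icc 1 N, (w - (m : ℂ)⁻¹)

theorem hasDerivAt_expSubOne (z : ℂ) :
    HasDerivAt expSubOne (Complex.exp (2 * π * z) * (2 * π)) z :=
  (((hasDerivAt_id z).const_mul (2 * (π : ℂ))).cexp.sub_const 1).congr_deriv (by simp)

theorem differentiable_expSubOne : Differentiable ℂ expSubOne :=
  fun z => (hasDerivAt_expSubOne z).differentiableAt

theorem exp_two_pi_mul_node (j : ℕ) : Complex.exp (2 * π * node j) = 1 := by
  rw [node, show 2 * π * (j * Complex.I) = (j : ℤ) * (2 * π * Complex.I) by push_cast; ring,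
    Complex.exp_int_mul_two_pi_mul_I]

theorem expSubOne_node (j : ℕ) : expSubOne (node j) = 0 := by
  simp [expSubOne, exp_two_pi_mul_node]

theorem hasDerivAt_expSubOne_node (j : ℕ) : HasDerivAt expSubOne (2 * π) (node j) := by
  simpa [exp_two_pi_mul_node] using hasDerivAt_expSubOne (node j)

theorem norm_expSubOne_le (z : ℂ) : ‖expSubOne z‖ ≤ 2 * Real.exp (2 * π * ‖z‖) := by
  have h : ‖Complex.exp (2 * π * z)‖ ≤ Real.exp (2 * π * ‖z‖) := by
    simpa [Complex.norm_real, abs_of_pos Real.pi_pos] using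
      Complex.norm_exp_le_exp_norm (2 * π * z)
  calc ‖expSubOne z‖ ≤ ‖Complex.exp (2 * π * z)‖ + ‖(1 : ℂ)‖ := norm_sub_le _ _
    _ ≤ 2 * Real.exp (2 * π * ‖z‖) := by
        linarith [Real.one_le_exp (by positivity : 0 ≤ 2 * π * ‖z‖), norm_one (α := ℂ)]

theorem eventually_expSubOne_eq_zero_imp (j : ℕ) :
    ∀ᶠ z in 𝓝 (node j), expSubOne z = 0 → z = node j := by
  have := (hasDerivAt_expSubOne_node j).eventually_ne (c := 0) (by simp [Real.pi_ne_zero])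
  filter_upwards [eventually_nhdsWithin_iff.1 this] with z hz hz0
  by_contra h
  exact hz h hz0

theorem node_injective : Function.Injective node := fun j j' h => by
  simpa [node, Complex.I_ne_zero] using h

theorem norm_node (j : ℕ) : ‖node j‖ = j := by simp [node]

theorem differentiable_lagrangeFactor (j : ℕ) : Differentiable ℂ (lagrangeFactor j) :=
  differentiableOn_univ.1 <|
    (Complex.differentiableOn_dslope univ_mem).2 differentiable_expSubOne.differentiableOn

theorem lagrangeFactor_node_self (j : ℕ) : lagrangeFactor j (node j) = 2 * π := by
  rw [lagrangeFactor, dslope_same, (hasDerivAt_expSubOne_node j).deriv]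

theorem lagrangeFactor_node_of_ne {j j' : ℕ} (h : j' ≠ j) : lagrangeFactor j (node j') = 0 := by
  rw [lagrangeFactor, dslope_of_ne _ (node_injective.ne h), slope_def_module, expSubOne_node,
    expSubOne_node, sub_zero, smul_zero]

theorem norm_lagrangeFactor_le (j : ℕ) (z : ℂ) :
    ‖lagrangeFactor j z‖ ≤ 2 * Real.exp (2 * π * (‖z‖ + 2)) :=
  norm_dslope_le differentiable_expSubOne (node j) (Φ := fun t => 2 * Real.exp (2 * π * t))
    (fun s t hst => by dsimp only; gcongr)
    (fun z => by simpa [expSubOne_node] using norm_expSubOne_le z) z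

theorem differentiable_invNatPoly (N : ℕ) : Differentiable ℂ (invNatPoly N) := by
  unfold invNatPoly
  fun_prop

theorem invNatPoly_inv_eq_zero {N m : ℕ} (hm : m ∈ Finset.Icc 1 N) :
    invNatPoly N (m : ℂ)⁻¹ = 0 :=
  Finset.prod_eq_zero hm (sub_self _)

theorem eventually_invNatPoly_eq_zero_imp (N : ℕ) (y : ℂ) :
    ∀ᶠ w in 𝓝 y, invNatPoly N w = 0 → w = y := by
  have hfin : {w | invNatPoly N w = 0}.Finite :=
    ((Finset.Icc 1 N).finite_toSet.image fun m : ℕ => (m : ℂ)⁻¹).subset fun w hw => by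
      obtain ⟨m, hm, hw⟩ := Finset.prod_eq_zero_iff.1 hw
      exact ⟨m, hm, (sub_eq_zero.1 hw).symm⟩
  exact hfin.eventually_mem_imp_eq y

theorem norm_invNatPoly_le (N : ℕ) {w : ℂ} {r : ℝ} (hw : ‖w‖ ≤ r) :
    ‖invNatPoly N w‖ ≤ (r + 1) ^ N := by
  rw [invNatPoly, norm_prod]
  calc ∏ m ∈ Finset.Icc 1 N, ‖w - (m : ℂ)⁻¹‖ ≤ ∏ _m ∈ Finset.Icc 1 N, (r + 1) := by
        refine Finset.prod_le_prod (fun _ _ => norm_nonneg _) fun m hm => ?_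
        have hm1 : (1 : ℝ) ≤ m := by exact_mod_cast (Finset.mem_Icc.1 hm).1
        calc ‖w - (m : ℂ)⁻¹‖ ≤ ‖w‖ + ‖(m : ℂ)⁻¹‖ := norm_sub_le _ _
          _ ≤ r + 1 := by
              rw [norm_inv, Complex.norm_natCast]
              linarith [inv_le_one_of_one_le₀ hm1]
    _ = (r + 1) ^ N := by simp

def seriesTerm (j N : ℕ) (p : ℂ × ℂ) : ℂ := lagrangeFactor j p.1 * invNatPoly N p.2

theorem differentiable_seriesTerm (j N : ℕ) : Differentiable ℂ (seriesTerm j N) :=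
  ((differentiable_lagrangeFactor j).comp differentiable_fst).mul
    ((differentiable_invNatPoly N).comp differentiable_snd)

theorem exists_norm_seriesTerm_le {ε : ℝ} (hε : 0 < ε) (j N : ℕ) :
    ∃ B > 0, ∀ r (p : ℂ × ℂ), ‖p‖ ≤ r → ‖seriesTerm j N p‖ ≤ B * Real.exp (r ^ (1 + ε)) := by
  refine ⟨2 * Real.exp (4 * π) * Real.exp ((2 * π + N) ^ (1 + ε⁻¹)), by positivity,
    fun r p hp => ?_⟩
  have hr : 0 ≤ r := (norm_nonneg p).trans hp
  have hE : ‖lagrangeFactor j p.1‖ ≤ 2 * Real.exp (4 * π) * Real.exp (2 * π * r) := by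
    refine (norm_lagrangeFactor_le j p.1).trans ?_
    rw [mul_assoc 2 (Real.exp (4 * π)), ← Real.exp_add]
    gcongr 2 * Real.exp ?_
    nlinarith [norm_fst_le p, Real.pi_pos]
  have hP : ‖invNatPoly N p.2‖ ≤ Real.exp (N * r) := by
    refine (norm_invNatPoly_le N ((norm_snd_le p).trans hp)).trans ?_
    rw [Real.exp_nat_mul]
    gcongr
    linarith [Real.add_one_le_exp r]
  have hexp := Real.exp_mul_le_exp_rpow_mul_exp_rpow (by positivity : 0 ≤ 2 * π + N) hr hε
  rw [add_mul, Real.exp_add] at hexp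
  calc ‖seriesTerm j N p‖ = ‖lagrangeFactor j p.1‖ * ‖invNatPoly N p.2‖ := norm_mul _ _
    _ ≤ 2 * Real.exp (4 * π) * (Real.exp (2 * π * r) * Real.exp (N * r)) := by
        rw [← mul_assoc]; gcongr
    _ ≤ 2 * Real.exp (4 * π) * (Real.exp ((2 * π + N) ^ (1 + ε⁻¹)) * Real.exp (r ^ (1 + ε))) := by
        gcongr
    _ = _ := by ring

def bezoutMap (c : ℕ → ℂ) (n : ℕ → ℕ) (p : ℂ × ℂ) : ℂ × ℂ :=
  (expSubOne p.1, ∑' j, c j • seriesTerm j (n j) p)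

theorem tsum_seriesTerm_node (c : ℕ → ℂ) (n : ℕ → ℕ) (j : ℕ) (w : ℂ) :
    ∑' i, c i • seriesTerm i (n i) (node j, w) = c j * (2 * π * invNatPoly (n j) w) := by
  rw [tsum_eq_single j fun i hi => by
    simp [seriesTerm, lagrangeFactor_node_of_ne (Ne.symm hi)]]
  simp [seriesTerm, lagrangeFactor_node_self]

theorem bezoutMap_node_inv (c : ℕ → ℂ) {n : ℕ → ℕ} {j m : ℕ} (hm : m ∈ Finset.Icc 1 (n j)) :
    bezoutMap c n (node j, (m : ℂ)⁻¹) = 0 := by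
  rw [bezoutMap, tsum_seriesTerm_node, expSubOne_node, invNatPoly_inv_eq_zero hm]
  simp

theorem eventually_bezoutMap_eq_zero_imp {c : ℕ → ℂ} (n : ℕ → ℕ) {j : ℕ} (hc : c j ≠ 0)
    (y : ℂ) : ∀ᶠ p in 𝓝 (node j, y), bezoutMap c n p = 0 → p = (node j, y) := by
  filter_upwards [(eventually_expSubOne_eq_zero_imp j).prod_nhds
    (eventually_invNatPoly_eq_zero_imp (n j) y)]
  rintro ⟨z, w⟩ ⟨hz, hw⟩ hzero
  dsimp only at hz hw
  simp only [bezoutMap, Prod.mk_eq_zero] at hzero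
  obtain rfl := hz hzero.1
  rw [tsum_seriesTerm_node] at hzero
  rw [hw (by simpa [hc, Real.pi_ne_zero] using hzero.2)]

theorem norm_bezoutMap_le {ε : ℝ} (hε : 0 < ε) {c : ℕ → ℂ} {n : ℕ → ℕ}
    (hbound : ∀ r (p : ℂ × ℂ), ‖p‖ ≤ r →
      ‖∑' j, c j • seriesTerm j (n j) p‖ ≤ 2 * Real.exp (r ^ (1 + ε)))
    {r : ℝ} {p : ℂ × ℂ} (hp : ‖p‖ ≤ r) :
    ‖bezoutMap c n p‖ ≤ 2 * Real.exp ((2 * π) ^ (1 + ε⁻¹)) * Real.exp (r ^ (1 + ε)) := by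
  have hr : 0 ≤ r := (norm_nonneg p).trans hp
  rw [bezoutMap, Prod.norm_def, mul_assoc]
  refine max_le ?_ ((hbound r p hp).trans ?_)
  · refine (norm_expSubOne_le p.1).trans ?_
    gcongr
    refine (Real.exp_le_exp.2 ?_).trans
      (Real.exp_mul_le_exp_rpow_mul_exp_rpow (by positivity) hr hε)
    gcongr
    exact (norm_fst_le p).trans hp
  · gcongr
    exact le_mul_of_one_le_left (by positivity) (Real.one_le_exp (by positivity))

def zeroFinset (n : ℕ → ℕ) (k : ℕ) : Finset (ℂ × ℂ) :=
  ((Finset.Icc 1 k).sigma fun j => Finset.Icc 1 (n j)).image fun x => (node x.1, (x.2 : ℂ)⁻¹)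

theorem card_zeroFinset (n : ℕ → ℕ) (k : ℕ) :
    (zeroFinset n k).card = ∑ i ∈ Finset.Icc 1 k, n i := by
  rw [zeroFinset, Finset.card_image_of_injective, Finset.card_sigma]
  · simp
  rintro ⟨j, m⟩ ⟨j', m'⟩ h
  obtain ⟨hj, hm⟩ := Prod.mk.inj h
  obtain rfl := node_injective hj
  simp_all

theorem zeroFinset_subset_closedBall (n : ℕ → ℕ) (k : ℕ) :
    (zeroFinset n k : Set (ℂ × ℂ)) ⊆ closedBall 0 (2 ^ k) := by
  intro z hz
  obtain ⟨⟨j, m⟩, hjm, rfl⟩ := Finset.mem_image.1 hz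
  obtain ⟨hj, hm⟩ := Finset.mem_sigma.1 hjm
  have hk : (j : ℝ) ≤ 2 ^ k := by
    exact_mod_cast (Finset.mem_Icc.1 hj).2.trans Nat.lt_two_pow_self.le
  have hm1 : (1 : ℝ) ≤ m := by exact_mod_cast (Finset.mem_Icc.1 hm).1
  rw [mem_closedBall_zero_iff, Prod.norm_def, norm_node, norm_inv, Complex.norm_natCast]
  exact max_le hk ((inv_le_one_of_one_le₀ hm1).trans (one_le_pow₀ one_le_two))

end BezoutCounterexample

end

open BezoutCounterexample

theorem stmt18_general (ε : ℝ) (hε : 0 < ε) (n : ℕ → ℕ) :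
    ∃ (f : ℂ × ℂ → ℂ × ℂ) (C : ℝ), 0 < C ∧ Differentiable ℂ f ∧
      (∀ r : ℝ, 0 ≤ r → ∀ z ∈ Metric.closedBall (0 : ℂ × ℂ) r,
        ‖f z‖ ≤ C * Real.exp (r ^ (1 + ε))) ∧
      (∀ k : ℕ, 1 ≤ k → ∃ S : Finset (ℂ × ℂ),
        (∑ i ∈ Finset.Icc 1 k, n i) ≤ S.card ∧
        ∀ z ∈ S, z ∈ Metric.closedBall (0 : ℂ × ℂ) (2 ^ k) ∧ f z = 0 ∧
          ∃ U ∈ nhds z, ∀ w ∈ U, f w = 0 → w = z) := by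
  obtain ⟨c, hc, hdiff, hbound⟩ := exists_differentiable_tsum_smul_norm_le
    (fun j => differentiable_seriesTerm j (n j)) fun j => exists_norm_seriesTerm_le hε j (n j)
  refine ⟨bezoutMap c n, 2 * Real.exp ((2 * π) ^ (1 + ε⁻¹)), by positivity,
    (differentiable_expSubOne.comp differentiable_fst).prodMk hdiff,
    fun r _ z hz => norm_bezoutMap_le hε hbound (mem_closedBall_zero_iff.1 hz),
    fun k _ => ⟨zeroFinset n k, (card_zeroFinset n k).ge, fun z hz => ?_⟩⟩
  obtain ⟨⟨j, m⟩, hjm, rfl⟩ := Finset.mem_image.1 hz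
  exact ⟨zeroFinset_subset_closedBall n k hz, bezoutMap_node_inv c (Finset.mem_sigma.1 hjm).2,
    (eventually_bezoutMap_eq_zero_imp n (hc j) _).exists_mem⟩

theorem stmt18 (ε : ℝ) (hε : 0 < ε) (n : ℕ → ℕ) (hn : ∀ i, 1 ≤ n i) :
    ∃ (f : ℂ × ℂ → ℂ × ℂ) (C : ℝ), 0 < C ∧ Differentiable ℂ f ∧
      (∀ r : ℝ, 0 ≤ r → ∀ z ∈ Metric.closedBall (0 : ℂ × ℂ) r,
        ‖f z‖ ≤ C * Real.exp (r ^ (1 + ε))) ∧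
      (∀ k : ℕ, 1 ≤ k → ∃ S : Finset (ℂ × ℂ),
        (∑ i ∈ Finset.Icc 1 k, n i) ≤ S.card ∧
        ∀ z ∈ S, z ∈ Metric.closedBall (0 : ℂ × ℂ) (2 ^ k) ∧ f z = 0 ∧
          ∃ U ∈ nhds z, ∀ w ∈ U, f w = 0 → w = z) :=
  stmt18_general ε hε n
end
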